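/- Functional equation for B: the series B = (1−x)/(A^{(x−1)/2} − x) ∈ ℚ(x)[[t]] satisfies ( B²(1 + x + xt) / (1 − x + 2xB) )^{(x−1)/2} = (1−x)/B + x. -/

import Mathlib

open PowerSeries

noncomputable section

abbrev K : Type := RatFunc ℚ

/-- `x`, the variable of the coefficient field `ℚ(x)`. -/
abbrev x : K := RatFunc.X

/-- Formal exponential `exp S = ∑ Sⁿ/n!` of a power series (intended for `S` with zero
constant term, in which case the coefficientwise formula below is the usual one). -/
def psExp (S : PowerSeries K) : PowerSeries K :=
  PowerSeries.mk fun m =>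
    ∑ n ∈ Finset.range (m + 1), (n.factorial : K)⁻¹ * PowerSeries.coeff m (S ^ n)

/-- Formal logarithm `log P = ∑_{n≥1} (−1)^{n+1} (P−1)ⁿ/n` of a power series (intended for
`P` with constant term `1`). -/
def psLog (P : PowerSeries K) : PowerSeries K :=
  PowerSeries.mk fun m =>
    ∑ n ∈ Finset.Icc 1 m, (-1 : K) ^ (n + 1) * (n : K)⁻¹ * PowerSeries.coeff m ((P - 1) ^ n)

/-- Formal power `P^a := exp(a · log P)` for `a ∈ ℚ(x)`, for `P` with constant term `1`. -/
def psPow (a : K) (P : PowerSeries K) : PowerSeries K :=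
  psExp (PowerSeries.C a * psLog P)

end

noncomputable section Aux

instance : CharZero K := charZero_of_injective_algebraMap (RatFunc.algebraMap_injective ℚ)

local notation "D" => PowerSeries.derivative K

lemma coeff_zero_pow_mul {S : PowerSeries K} (T : PowerSeries K)
    (hS : PowerSeries.constantCoeff S = 0)
    {j k : ℕ} (h : j < k) : PowerSeries.coeff j (S ^ k * T) = 0 := by
  have hx : (PowerSeries.X : PowerSeries K) ^ k ∣ S ^ k * T :=
    dvd_mul_of_dvd_left (pow_dvd_pow_of_dvd (PowerSeries.X_dvd_iff.mpr hS) k) T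
  exact PowerSeries.X_pow_dvd_iff.mp hx j h

lemma coeff_zero_pow {S : PowerSeries K} (hS : PowerSeries.constantCoeff S = 0)
    {j k : ℕ} (h : j < k) : PowerSeries.coeff j (S ^ k) = 0 := by
  simpa using coeff_zero_pow_mul 1 hS h

lemma constantCoeff_psExp (S : PowerSeries K) :
    PowerSeries.constantCoeff (psExp S) = 1 := by
  rw [← PowerSeries.coeff_zero_eq_constantCoeff]
  simp [psExp]

lemma constantCoeff_psLog (P : PowerSeries K) :
    PowerSeries.constantCoeff (psLog P) = 0 := by
  rw [← PowerSeries.coeff_zero_eq_constantCoeff]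
  simp [psLog]

lemma coeff_psExp (S : PowerSeries K) (m : ℕ) :
    PowerSeries.coeff m (psExp S) =
      ∑ k ∈ Finset.range (m + 1), (k.factorial : K)⁻¹ * PowerSeries.coeff m (S ^ k) := by
  rw [psExp, PowerSeries.coeff_mk]

lemma coeff_psLog (P : PowerSeries K) (m : ℕ) :
    PowerSeries.coeff m (psLog P) =
      ∑ k ∈ Finset.Icc 1 m, (-1 : K) ^ (k + 1) * (k : K)⁻¹ * PowerSeries.coeff m ((P - 1) ^ k) := by
  rw [psLog, PowerSeries.coeff_mk]

lemma coeff_derivative_pow (S : PowerSeries K) (k n : ℕ) :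
    PowerSeries.coeff (n+1) (S ^ k) * ((n : K) + 1) =
      (k : K) * PowerSeries.coeff n (S ^ (k-1) * D S) := by
  have h := PowerSeries.coeff_derivative (S ^ k) n
  rw [Derivation.leibniz_pow, map_nsmul, nsmul_eq_mul, smul_eq_mul] at h
  push_cast at h
  exact h.symm

lemma derivative_psExp {S : PowerSeries K} (hS : PowerSeries.constantCoeff S = 0) :
    D (psExp S) = psExp S * D S := by
  ext n
  rw [PowerSeries.coeff_derivative]
  rw [coeff_psExp, Finset.sum_mul]
  have hL : ∀ k ∈ Finset.range (n+1+1),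
      (k.factorial : K)⁻¹ * PowerSeries.coeff (n+1) (S^k) * ((n:K)+1)
      = (k.factorial : K)⁻¹ * ((k:K) * PowerSeries.coeff n (S^(k-1) * D S)) := by
    intro k _
    rw [mul_assoc, coeff_derivative_pow]
  rw [Finset.sum_congr rfl hL, Finset.sum_range_succ']
  have hfs : ∀ (k:ℕ) (z:K), (((k+1).factorial : K))⁻¹ * ((((k+1):ℕ) : K) * z)
      = (k.factorial : K)⁻¹ * z := by
    intro k z
    rw [Nat.factorial_succ]
    have h1 : ((k:K)+1) ≠ 0 := Nat.cast_add_one_ne_zero k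
    have h2 : ((k.factorial:ℕ) : K) ≠ 0 := Nat.cast_ne_zero.mpr k.factorial_ne_zero
    push_cast
    field_simp
  simp only [Nat.cast_zero, zero_mul, mul_zero, add_zero, Nat.add_sub_cancel]
  rw [Finset.sum_congr rfl (fun k _ => hfs k _)]
  -- now handle RHS
  rw [PowerSeries.coeff_mul, Finset.Nat.sum_antidiagonal_eq_sum_range_succ_mk]
  have hR : ∀ i ∈ Finset.range (n+1),
      PowerSeries.coeff i (psExp S) * PowerSeries.coeff (n-i) (D S)
      = ∑ k ∈ Finset.range (n+1),
          (k.factorial : K)⁻¹ * (PowerSeries.coeff i (S^k) * PowerSeries.coeff (n-i) (D S)) := by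
    intro i hi
    rw [coeff_psExp, Finset.sum_mul]
    rw [Finset.sum_subset (Finset.range_subset_range.mpr
      (Nat.succ_le_succ (Nat.lt_succ_iff.mp (Finset.mem_range.mp hi))))]
    · exact Finset.sum_congr rfl (fun k _ => by ring)
    · intro k hk hk2
      have hik : i < k := by simp only [Finset.mem_range] at hk hk2; omega
      rw [coeff_zero_pow hS hik, mul_zero, zero_mul]
  rw [Finset.sum_congr rfl hR, Finset.sum_comm]
  apply Finset.sum_congr rfl
  intro k _
  rw [← Finset.mul_sum, PowerSeries.coeff_mul, Finset.Nat.sum_antidiagonal_eq_sum_range_succ_mk]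

lemma derivative_sub_one (P : PowerSeries K) : D (P - 1) = D P := by
  rw [map_sub]
  simp

lemma coeff_derivative_psLog (P : PowerSeries K) (n : ℕ) :
    PowerSeries.coeff n (D (psLog P)) =
      ∑ m ∈ Finset.range (n+1), (-1:K)^m * PowerSeries.coeff n ((P-1)^m * D P) := by
  rw [PowerSeries.coeff_derivative, coeff_psLog, Finset.sum_mul]
  have e0 : Finset.range (n+2) = insert 0 (Finset.Icc 1 (n+1)) := by
    ext i; simp; omega
  have e1 : ∑ k ∈ Finset.Icc 1 (n+1),
        (-1:K)^(k+1) * (k : K)⁻¹ * PowerSeries.coeff (n+1) ((P-1)^k) * ((n:K)+1)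
      = ∑ k ∈ Finset.range (n+2),
        (-1:K)^(k+1) * (k : K)⁻¹ * PowerSeries.coeff (n+1) ((P-1)^k) * ((n:K)+1) := by
    rw [e0, Finset.sum_insert (by simp)]
    simp
  rw [e1, Finset.sum_range_succ']
  simp only [Nat.cast_zero, inv_zero, mul_zero, zero_mul, add_zero]
  apply Finset.sum_congr rfl
  intro k _
  have hd := coeff_derivative_pow (P - 1) (k+1) n
  rw [Nat.add_sub_cancel, derivative_sub_one] at hd
  have hk : ((k+1 : ℕ) : K) ≠ 0 := by
    push_cast
    exact Nat.cast_add_one_ne_zero k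
  calc (-1:K)^(k+1+1) * ((↑(k+1) : K))⁻¹ * PowerSeries.coeff (n+1) ((P-1)^(k+1)) * ((n:K)+1)
      = (-1:K)^(k+1+1) * (((↑(k+1) : K))⁻¹ *
          (PowerSeries.coeff (n+1) ((P-1)^(k+1)) * ((n:K)+1))) := by ring
    _ = (-1:K)^(k+1+1) * PowerSeries.coeff n ((P-1)^k * D P) := by
          rw [hd, inv_mul_cancel_left₀ hk]
    _ = (-1:K)^k * PowerSeries.coeff n ((P-1)^k * D P) := by
          rw [show (-1:K)^(k+1+1) = (-1)^k by rw [pow_succ, pow_succ]; ring]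

lemma psLog_mul {P : PowerSeries K} (hP : PowerSeries.constantCoeff P = 1) :
    D (psLog P) * P = D P := by
  have hQ : PowerSeries.constantCoeff (P - 1) = 0 := by
    rw [map_sub, hP]; simp
  ext n
  rw [show D (psLog P) * P = D (psLog P) * (P - 1) + D (psLog P) by ring, map_add]
  rw [PowerSeries.coeff_mul, Finset.Nat.sum_antidiagonal_eq_sum_range_succ_mk]
  have hR : ∀ i ∈ Finset.range (n+1),
      PowerSeries.coeff i (D (psLog P)) * PowerSeries.coeff (n-i) (P - 1)
      = ∑ m ∈ Finset.range (n+1),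
          (-1:K)^m * (PowerSeries.coeff i ((P-1)^m * D P) * PowerSeries.coeff (n-i) (P - 1)) := by
    intro i hi
    rw [coeff_derivative_psLog, Finset.sum_mul]
    rw [Finset.sum_subset (Finset.range_subset_range.mpr
      (Nat.succ_le_succ (Nat.lt_succ_iff.mp (Finset.mem_range.mp hi))))]
    · exact Finset.sum_congr rfl (fun k _ => by ring)
    · intro k hk hk2
      have hik : i < k := by simp only [Finset.mem_range] at hk hk2; omega
      simp [coeff_zero_pow_mul _ hQ hik]
  rw [Finset.sum_congr rfl hR, Finset.sum_comm]
  have e2 : ∀ m ∈ Finset.range (n+1),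
      (∑ i ∈ Finset.range (n+1),
        (-1:K)^m * (PowerSeries.coeff i ((P-1)^m * D P) * PowerSeries.coeff (n-i) (P - 1)))
      = (-1:K)^m * PowerSeries.coeff n ((P-1)^(m+1) * D P) := by
    intro m _
    rw [← Finset.mul_sum]
    congr 1
    rw [show (P-1)^(m+1) * D P = ((P-1)^m * D P) * (P - 1) by ring]
    rw [PowerSeries.coeff_mul, Finset.Nat.sum_antidiagonal_eq_sum_range_succ_mk]
  rw [Finset.sum_congr rfl e2, coeff_derivative_psLog]
  rw [Finset.sum_range_succ, Finset.sum_range_succ' _ n]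
  rw [coeff_zero_pow_mul _ hQ (Nat.lt_succ_self n), mul_zero, add_zero]
  simp only [pow_zero, pow_zero, one_mul, pow_succ]
  have hz : ∑ x ∈ Finset.range n,
        ((-1:K)^x * -1 * PowerSeries.coeff n ((P-1)^x * (P-1) * D P)
         + (-1:K)^x * PowerSeries.coeff n ((P-1)^x * (P-1) * D P)) = 0 := by
    apply Finset.sum_eq_zero; intro i _; ring
  rw [Finset.sum_add_distrib] at hz
  linear_combination hz

lemma ode_unique {U V E : PowerSeries K} (hU : PowerSeries.constantCoeff U ≠ 0)
    (h0 : PowerSeries.constantCoeff E = 0) (h : U * D E = V * E) : E = 0 := by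
  have key : ∀ n, PowerSeries.coeff n E = 0 := by
    intro n
    induction n using Nat.strong_induction_on with
    | _ n ih =>
      match n, ih with
      | 0, _ => rw [PowerSeries.coeff_zero_eq_constantCoeff]; exact h0
      | Nat.succ n, ih =>
        have hc := congrArg (PowerSeries.coeff n) h
        rw [PowerSeries.coeff_mul, PowerSeries.coeff_mul] at hc
        rw [Finset.sum_eq_single ((0 : ℕ), n)] at hc
        rotate_left
        · intro p hp hne
          have hps : p.1 + p.2 = n := Finset.HasAntidiagonal.mem_antidiagonal.mp hp
          have h2 : p.2 < n := by
            rcases Nat.lt_or_ge p.2 n with h | h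
            · exact h
            · exfalso; apply hne
              have : p.2 = n := by omega
              have : p.1 = 0 := by omega
              ext <;> simp [*]
          rw [PowerSeries.coeff_derivative, ih (p.2 + 1) (by omega), zero_mul, mul_zero]
        · intro hn
          exact absurd (Finset.HasAntidiagonal.mem_antidiagonal.mpr (by simp)) hn
        have hrhs : ∑ p ∈ Finset.HasAntidiagonal.antidiagonal n,
            PowerSeries.coeff p.1 V * PowerSeries.coeff p.2 E = 0 := by
          apply Finset.sum_eq_zero
          intro p hp
          have hps : p.1 + p.2 = n := Finset.HasAntidiagonal.mem_antidiagonal.mp hp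
          rw [ih p.2 (by omega), mul_zero]
        rw [hrhs, PowerSeries.coeff_derivative] at hc
        have h1 : ((n : K) + 1) ≠ 0 := Nat.cast_add_one_ne_zero n
        have h2 : PowerSeries.coeff 0 U ≠ 0 := by
          rwa [PowerSeries.coeff_zero_eq_constantCoeff]
        simp only [mul_eq_zero] at hc
        rcases hc with hc | hc
        · exact absurd hc h2
        · rcases hc with hc | hc
          · exact hc
          · exact absurd hc h1
  exact PowerSeries.ext fun n => by rw [key n, map_zero]

lemma fact_inv_succ (m : ℕ) :
    (((m+1).factorial : K))⁻¹ * ((m : K) + 1) = (m.factorial : K)⁻¹ := by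
  rw [Nat.factorial_succ]
  have h1 : ((m:K)+1) ≠ 0 := Nat.cast_add_one_ne_zero m
  have h2 : ((m.factorial : ℕ) : K) ≠ 0 := Nat.cast_ne_zero.mpr m.factorial_ne_zero
  push_cast
  field_simp

lemma recurrence_ode (a : ℕ → K) (ha0 : a 0 = 1) (ha1 : a 1 = 1)
    (ha : ∀ n : ℕ, 2 ≤ n → a n = a (n - 1) +
      x * ∑ j ∈ Finset.Icc 2 (n - 1), ((n - 1).choose j : K) * a j * a (n - j))
    (A : PowerSeries K) (hA : A = PowerSeries.mk fun n => (n.factorial : K)⁻¹ * a n) :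
    (1 + PowerSeries.C x + PowerSeries.C x * PowerSeries.X) * D A
      = A + PowerSeries.C x * (A * D A) := by
  have hc : ∀ m, PowerSeries.coeff m A = (m.factorial : K)⁻¹ * a m := by
    intro m; rw [hA, PowerSeries.coeff_mk]
  have hcD : ∀ m, PowerSeries.coeff m (D A) = (m.factorial : K)⁻¹ * a (m+1) := by
    intro m
    rw [PowerSeries.coeff_derivative, hc (m+1), mul_comm ((((m+1).factorial : K))⁻¹) (a (m+1)),
      mul_assoc, fact_inv_succ, mul_comm]
  have hsplit : (1 + PowerSeries.C x + PowerSeries.C x * PowerSeries.X) * D A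
      = D A + PowerSeries.C x * D A + PowerSeries.C x * (PowerSeries.X * D A) := by ring
  rw [hsplit]
  ext n
  simp only [map_add, PowerSeries.coeff_C_mul]
  match n with
  | 0 =>
    rw [hcD 0, hc 0]
    have hX : PowerSeries.coeff 0 (PowerSeries.X * D A) = 0 := by
      rw [PowerSeries.coeff_zero_eq_constantCoeff, map_mul, PowerSeries.constantCoeff_X, zero_mul]
    have hAD : PowerSeries.coeff 0 (A * D A) = 1 := by
      rw [PowerSeries.coeff_mul]
      simp [hc 0, hcD 0, ha0, ha1]
    rw [hX, hAD]
    simp [ha0, ha1]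
  | Nat.succ n =>
    have hX : PowerSeries.coeff (n+1) (PowerSeries.X * D A) = (n.factorial : K)⁻¹ * a (n+1) := by
      rw [PowerSeries.coeff_succ_X_mul, hcD n]
    have hAD : PowerSeries.coeff (n+1) (A * D A)
        = (((n+1).factorial : K))⁻¹ * (a (n+1+1) + ((n:K)+1) * a (n+1)
            + ∑ j ∈ Finset.Icc 2 (n+1), (((n+1).choose j : ℕ) : K) * a j * a (n+1+1-j)) := by
      rw [PowerSeries.coeff_mul, Finset.Nat.sum_antidiagonal_eq_sum_range_succ_mk]
      have hterm : ∀ i ∈ Finset.range (n+1+1),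
          PowerSeries.coeff i A * PowerSeries.coeff (n+1-i) (D A)
          = (((n+1).factorial : K))⁻¹
              * ((((n+1).choose i : ℕ) : K) * a i * a (n+1-i+1)) := by
        intro i hi
        have hile : i ≤ n+1 := Nat.lt_succ_iff.mp (Finset.mem_range.mp hi)
        rw [hc i, hcD (n+1-i)]
        have hfac := Nat.choose_mul_factorial_mul_factorial hile
        have hfacK : (((n+1).choose i : ℕ) : K) * (i.factorial : K) * (((n+1-i).factorial : ℕ) : K)
            = (((n+1).factorial : ℕ) : K) := by
          push_cast [← hfac]
          ring
        have h1 : ((i.factorial : ℕ) : K) ≠ 0 := Nat.cast_ne_zero.mpr i.factorial_ne_zero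
        have h2 : (((n+1-i).factorial : ℕ) : K) ≠ 0 := Nat.cast_ne_zero.mpr (n+1-i).factorial_ne_zero
        have h3 : (((n+1).factorial : ℕ) : K) ≠ 0 := Nat.cast_ne_zero.mpr (n+1).factorial_ne_zero
        have key : (((n+1).choose i : ℕ) : K)
            = (((n+1).factorial : ℕ) : K) * (((i.factorial : ℕ) : K))⁻¹
                * ((((n+1-i).factorial : ℕ) : K))⁻¹ := by
          field_simp
          linear_combination hfacK
        rw [key]
        field_simp
      rw [Finset.sum_congr rfl hterm, ← Finset.mul_sum]
      congr 1
      have hsetsplit : Finset.range (n+1+1) = insert 0 (insert 1 (Finset.Icc 2 (n+1))) := by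
        ext i; simp; omega
      rw [hsetsplit, Finset.sum_insert (by simp), Finset.sum_insert (by simp)]
      have e0 : (((n+1).choose 0 : ℕ) : K) * a 0 * a (n+1-0+1) = a (n+1+1) := by
        simp [ha0]
      have e1 : (((n+1).choose 1 : ℕ) : K) * a 1 * a (n+1-1+1) = ((n:K)+1) * a (n+1) := by
        rw [Nat.choose_one_right, ha1]
        push_cast
        ring_nf
      rw [e0, e1]
      have e2 : ∀ j ∈ Finset.Icc 2 (n+1),
          (((n+1).choose j : ℕ) : K) * a j * a (n+1-j+1)
          = (((n+1).choose j : ℕ) : K) * a j * a (n+1+1-j) := by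
        intro j hj
        simp only [Finset.mem_Icc] at hj
        congr 2
        omega
      rw [Finset.sum_congr rfl e2]
      ring
    rw [hX, hAD, hc (n+1), hcD (n+1)]
    have hrec := ha (n+1+1) (by omega)
    simp only [Nat.add_sub_cancel] at hrec
    rw [hrec]
    have hinv : (n.factorial : K)⁻¹ = (((n+1).factorial : K))⁻¹ * ((n:K)+1) :=
      (fact_inv_succ n).symm
    rw [hinv]
    ring

lemma X_ne_one : (RatFunc.X : K) ≠ 1 := by
  intro h
  rw [← RatFunc.algebraMap_X (K := ℚ),
    show ((1 : K)) = algebraMap (Polynomial ℚ) K (Polynomial.C 1) by simp] at h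
  exact Polynomial.X_ne_C 1 (RatFunc.algebraMap_injective ℚ h)

lemma X_ne_neg_one : (RatFunc.X : K) ≠ -1 := by
  intro h
  rw [← RatFunc.algebraMap_X (K := ℚ),
    show ((-1 : K)) = algebraMap (Polynomial ℚ) K (Polynomial.C (-1)) by simp] at h
  exact Polynomial.X_ne_C (-1) (RatFunc.algebraMap_injective ℚ h)

local notation "Cx" => PowerSeries.C x
local notation "PX" => (PowerSeries.X : PowerSeries K)

/-- Functional equation for :
. -/
theorem functional_equation_for_B
    (a : ℕ → K) (ha0 : a 0 = 1) (ha1 : a 1 = 1)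
    (ha : ∀ n : ℕ, 2 ≤ n → a n = a (n - 1) +
      x * ∑ j ∈ Finset.Icc 2 (n - 1), ((n - 1).choose j : K) * a j * a (n - j))
    (A : PowerSeries K) (hA : A = PowerSeries.mk fun n => (n.factorial : K)⁻¹ * a n)
    (B : PowerSeries K)
    (hB : B = PowerSeries.C (1 - x) * (psPow ((x - 1) / 2) A - PowerSeries.C x)⁻¹) :
    psPow ((x - 1) / 2)
        (B ^ 2 * (PowerSeries.C (1 + x) + PowerSeries.C x * PowerSeries.X) *
          (PowerSeries.C (1 - x) + 2 * PowerSeries.C x * B)⁻¹) =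
      PowerSeries.C (1 - x) * B⁻¹ + PowerSeries.C x := by
  have hx1 : (1 : K) - x ≠ 0 := sub_ne_zero.mpr (Ne.symm X_ne_one)
  have hx2 : (1 : K) + x ≠ 0 := by
    intro h
    exact X_ne_neg_one (by linear_combination h)
  have hODE := recurrence_ode a ha0 ha1 ha A hA
  have hA0 : PowerSeries.constantCoeff A = 1 := by
    rw [hA, ← PowerSeries.coeff_zero_eq_constantCoeff, PowerSeries.coeff_mk]
    simp [ha0]
  set CC : PowerSeries K := psPow ((x - 1) / 2) A with hCCdef
  have hL0 : PowerSeries.constantCoeff (PowerSeries.C ((x-1)/2) * psLog A) = 0 := by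
    rw [map_mul, constantCoeff_psLog, mul_zero]
  have hCC0 : PowerSeries.constantCoeff CC = 1 := constantCoeff_psExp _
  have hDCC : D CC = CC * (PowerSeries.C ((x-1)/2) * D (psLog A)) := by
    rw [hCCdef, psPow, derivative_psExp hL0]
    congr 1
    rw [Derivation.leibniz]
    simp [smul_eq_mul]
  have hLA : D (psLog A) * A = D A := psLog_mul hA0
  have h2cc : 2 * PowerSeries.C ((x-1)/2) = Cx - 1 := by
    rw [show (2 : PowerSeries K) = PowerSeries.C 2 from (map_ofNat (PowerSeries.C) 2).symm, ← map_mul,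
      show ((1 : PowerSeries K)) = PowerSeries.C 1 by simp, ← map_sub]
    congr 1
    ring
  have hR1 : 2 * (A * D CC) = (Cx - 1) * (CC * D A) := by
    rw [hDCC]
    linear_combination (2 * PowerSeries.C ((x-1)/2) * CC) * hLA
      + (CC * D A) * h2cc
  have hDG : D (A * CC^2 - Cx^2 * A)
      = D A * CC^2 + A * (2 * CC * D CC) - Cx^2 * D A := by
    rw [map_sub]
    rw [Derivation.leibniz, Derivation.leibniz, Derivation.leibniz_pow]
    simp [smul_eq_mul]
    ring
  have hDH : D (1 - Cx^2 + (Cx - Cx^2) * PX) = Cx - Cx^2 := by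
    rw [map_add, map_sub, Derivation.leibniz, Derivation.leibniz_pow]
    simp [smul_eq_mul]
  have hGode : 2 * (A * D (A * CC^2 - Cx^2 * A))
      = 2 * (Cx * D A * (A * CC^2 - Cx^2 * A) + Cx^2*(Cx-1) * (D A * A)) := by
    rw [hDG]
    linear_combination (2 * A * CC) * hR1
  have hHode : 2 * (A * D (1 - Cx^2 + (Cx - Cx^2) * PX))
      = 2 * (Cx * D A * (1 - Cx^2 + (Cx - Cx^2) * PX) + Cx^2*(Cx-1) * (D A * A)) := by
    rw [hDH]
    linear_combination (2*Cx^2 - 2*Cx) * hODE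
  have hE0 : PowerSeries.constantCoeff
      ((A * CC^2 - Cx^2 * A) - (1 - Cx^2 + (Cx - Cx^2) * PX)) = 0 := by
    simp [map_sub, map_add, map_mul, map_pow, hA0, hCC0]
  have h2A0 : PowerSeries.constantCoeff (2 * A) ≠ 0 := by
    rw [map_mul, hA0, mul_one, map_ofNat]
    exact two_ne_zero
  have hEode : (2 * A) * D ((A * CC^2 - Cx^2 * A) - (1 - Cx^2 + (Cx - Cx^2) * PX))
      = (2 * Cx * D A) * ((A * CC^2 - Cx^2 * A) - (1 - Cx^2 + (Cx - Cx^2) * PX)) := by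
    rw [map_sub]
    linear_combination hGode - hHode
  have hManin : A * CC^2 - Cx^2 * A = 1 - Cx^2 + (Cx - Cx^2) * PX :=
    sub_eq_zero.mp (ode_unique h2A0 hE0 hEode)
  -- B facts
  have hCCx0 : PowerSeries.constantCoeff (CC - Cx) = 1 - x := by
    rw [map_sub, hCC0, PowerSeries.constantCoeff_C]
  have hinv1 : (CC - Cx) * (CC - Cx)⁻¹ = 1 :=
    PowerSeries.mul_inv_cancel _ (by rw [hCCx0]; exact hx1)
  have hBval : B * (CC - Cx) = 1 - Cx := by
    calc B * (CC - Cx) = PowerSeries.C (1-x) * ((CC - Cx) * (CC - Cx)⁻¹) := by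
          rw [hB]; ring
      _ = PowerSeries.C (1-x) := by rw [hinv1, mul_one]
      _ = 1 - Cx := by rw [map_sub, map_one]
  have hB0 : PowerSeries.constantCoeff B = 1 := by
    have h := congrArg (PowerSeries.constantCoeff) hBval
    rw [map_mul, hCCx0, map_sub, map_one, PowerSeries.constantCoeff_C] at h
    exact mul_right_cancel₀ hx1 (h.trans (one_mul _).symm)
  have hBB : B * B⁻¹ = 1 :=
    PowerSeries.mul_inv_cancel _ (by rw [hB0]; exact one_ne_zero)
  have hRHS : PowerSeries.C (1-x) * B⁻¹ = CC - Cx := by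
    calc PowerSeries.C (1-x) * B⁻¹ = (B * (CC - Cx)) * B⁻¹ := by
          rw [hBval, map_sub, map_one]
      _ = (CC - Cx) * (B * B⁻¹) := by ring
      _ = CC - Cx := by rw [hBB, mul_one]
  have hDn0 : PowerSeries.constantCoeff (PowerSeries.C (1 - x) + 2 * Cx * B) ≠ 0 := by
    rw [map_add, map_mul, map_mul, hB0, PowerSeries.constantCoeff_C, PowerSeries.constantCoeff_C]
    rw [map_ofNat]
    rw [show (1 - x) + 2 * x * 1 = 1 + x by ring]
    exact hx2
  have hDninv : (PowerSeries.C (1 - x) + 2 * Cx * B)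
      * (PowerSeries.C (1 - x) + 2 * Cx * B)⁻¹ = 1 :=
    PowerSeries.mul_inv_cancel _ hDn0
  have he : B * (CC + Cx) = PowerSeries.C (1 - x) + 2 * Cx * B := by
    rw [map_sub, map_one]
    linear_combination hBval
  have h1mCx : (1 : PowerSeries K) - Cx ≠ 0 := by
    intro h
    have := congrArg (PowerSeries.constantCoeff) h
    rw [map_sub, map_one, PowerSeries.constantCoeff_C, map_zero] at this
    exact hx1 this
  have hman2 : (1 - Cx) * (A * (PowerSeries.C (1 - x) + 2 * Cx * B))
      = (1 - Cx) * (B^2 * ((1 + Cx) + Cx * PX)) := by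
    linear_combination (-(A * (B * (CC + Cx)))) * hBval + (-((1:PowerSeries K) - Cx) * A) * he
      + B^2 * hManin
  have hkey : A * (PowerSeries.C (1 - x) + 2 * Cx * B) = B^2 * ((1 + Cx) + Cx * PX) :=
    mul_left_cancel₀ h1mCx hman2
  have hE : B ^ 2 * (PowerSeries.C (1 + x) + PowerSeries.C x * PowerSeries.X) *
      (PowerSeries.C (1 - x) + 2 * PowerSeries.C x * B)⁻¹ = A := by
    rw [show PowerSeries.C (1+x) = 1 + Cx by rw [map_add, map_one]]
    calc B ^ 2 * ((1 + Cx) + Cx * PX) * (PowerSeries.C (1 - x) + 2 * Cx * B)⁻¹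
        = (A * (PowerSeries.C (1 - x) + 2 * Cx * B))
            * (PowerSeries.C (1 - x) + 2 * Cx * B)⁻¹ := by rw [← hkey]
      _ = A * ((PowerSeries.C (1 - x) + 2 * Cx * B)
            * (PowerSeries.C (1 - x) + 2 * Cx * B)⁻¹) := by ring
      _ = A := by rw [hDninv, mul_one]
  rw [hE, ← hCCdef, hRHS]
  ring

end Aux
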